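/- arXiv:1412.1582 — 2 statements merged into one kernel-verified Lean document; each statement's English description precedes it below -/
import Mathlib

section
/- Fix t₀ ∈ ℝ and γ ≠ 0, and for t > t₀ define C₂(t) = γ(t−t₀)^{1/3} + (9/5)(t−t₀) and C₁(t) = C₂(t)(C₂'(t) − 2). Then C₁'(t) + C₁(t)²/C₂(t)² = −8/25 for all t > t₀ with C₂(t) ≠ 0. -/
open Real Set Filter Topology

/-
Writing `C₁ = C₂ (C₂' - 2)`, one has `C₁' + (C₁ / C₂)² = C₂' (C₂' - 2) + C₂ C₂'' + (C₂' - 2)²`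
wherever `C₂ ≠ 0`. With `b = γ (t - t₀)^{-2/3} / 3` the profile gives `C₂' = b + 9/5` and
`C₂ C₂'' = -(3b + 9/5) (2b/3)`, and the right-hand side collapses to `-8/25`: the terms in `b`
cancel, so the defect does not depend on `γ`.
-/

theorem deriv_mul_deriv_sub_const_add_sq_div_sq {f f' : ℝ → ℝ} {f'' c x : ℝ}
    (hf : ∀ᶠ y in 𝓝 x, HasDerivAt f (f' y) y) (hf' : HasDerivAt f' f'' x) (hfx : f x ≠ 0) :
    deriv (fun y => f y * (deriv f y - c)) x + (f x * (deriv f x - c)) ^ 2 / f x ^ 2 =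
      f' x * (f' x - c) + f x * f'' + (f' x - c) ^ 2 := by
  have hderiv : deriv f =ᶠ[𝓝 x] f' := hf.mono fun y hy => hy.deriv
  have hprod : (fun y => f y * (deriv f y - c)) =ᶠ[𝓝 x] fun y => f y * (f' y - c) :=
    hderiv.mono fun y hy => by simp only [hy]
  have hprod' : HasDerivAt (fun y => f y * (f' y - c)) (f' x * (f' x - c) + f x * f'') x :=
    hf.self_of_nhds.mul (hf'.sub_const c)
  rw [hprod.deriv_eq, hprod'.deriv, hderiv.eq_of_nhds,
    mul_pow, mul_div_cancel_left₀ _ (pow_ne_zero 2 hfx)]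

theorem hasDerivAt_rpow_sub_const {t₀ p x : ℝ} (hx : t₀ < x) :
    HasDerivAt (fun y => (y - t₀) ^ p) (p * (x - t₀) ^ (p - 1)) x := by
  simpa using ((hasDerivAt_id x).sub_const t₀).rpow_const (p := p) (Or.inl (sub_pos.2 hx).ne')

theorem hasDerivAt_profile {t₀ γ x : ℝ} (hx : t₀ < x) :
    HasDerivAt (fun y => γ * (y - t₀) ^ ((1 : ℝ) / 3) + 9 / 5 * (y - t₀))
      (γ / 3 * (x - t₀) ^ (-(2 : ℝ) / 3) + 9 / 5) x := by
  refine (((hasDerivAt_rpow_sub_const (p := 1 / 3) hx).const_mul γ).add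
    (((hasDerivAt_id x).sub_const t₀).const_mul (9 / 5 : ℝ))).congr_deriv ?_
  norm_num
  ring

theorem hasDerivAt_profile_deriv {t₀ γ x : ℝ} (hx : t₀ < x) :
    HasDerivAt (fun y => γ / 3 * (y - t₀) ^ (-(2 : ℝ) / 3) + 9 / 5)
      (-(2 * γ / 9) * (x - t₀) ^ (-(2 : ℝ) / 3) / (x - t₀)) x := by
  have hu : 0 < x - t₀ := sub_pos.2 hx
  have hpow : (x - t₀) ^ (-(2 : ℝ) / 3 - 1) = (x - t₀) ^ (-(2 : ℝ) / 3) / (x - t₀) := by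
    rw [rpow_sub hu, rpow_one]
  refine (((hasDerivAt_rpow_sub_const hx).const_mul (γ / 3)).add_const (9 / 5 : ℝ)).congr_deriv ?_
  rw [hpow]
  ring

theorem stmt_8_general (t₀ γ : ℝ)
    (C₂ : ℝ → ℝ)
    (hC₂ : ∀ t, C₂ t = γ * (t - t₀) ^ ((1:ℝ)/3) + (9/5) * (t - t₀))
    (C₁ : ℝ → ℝ) (hC₁ : ∀ t, C₁ t = C₂ t * (deriv C₂ t - 2)) :
    ∀ t > t₀, C₂ t ≠ 0 →
      deriv C₁ t + (C₁ t)^2 / (C₂ t)^2 = -8/25 := by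
  intro t ht hne
  obtain rfl : C₁ = fun y => C₂ y * (deriv C₂ y - 2) := funext hC₁
  have hC₂' : ∀ᶠ y in 𝓝 t, HasDerivAt C₂ (γ / 3 * (y - t₀) ^ (-(2 : ℝ) / 3) + 9 / 5) y := by
    rw [show C₂ = _ from funext hC₂]
    exact eventually_gt_nhds ht |>.mono fun y hy => hasDerivAt_profile hy
  rw [deriv_mul_deriv_sub_const_add_sq_div_sq hC₂' (hasDerivAt_profile_deriv ht) hne]
  have hu : t - t₀ ≠ 0 := (sub_pos.2 ht).ne'
  have hcube_root : (t - t₀) ^ ((1 : ℝ) / 3) = (t - t₀) * (t - t₀) ^ (-(2 : ℝ) / 3) := by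
    rw [← rpow_one_add' (sub_pos.2 ht).le (by norm_num)]
    norm_num
  rw [hC₂ t, hcube_root]
  field_simp
  ring

theorem stmt_8 (t₀ γ : ℝ) (hγ : γ ≠ 0)
    (C₂ : ℝ → ℝ)
    (hC₂ : ∀ t, C₂ t = γ * (t - t₀) ^ ((1:ℝ)/3) + (9/5) * (t - t₀))
    (C₁ : ℝ → ℝ) (hC₁ : ∀ t, C₁ t = C₂ t * (deriv C₂ t - 2)) :
    ∀ t > t₀, C₂ t ≠ 0 →
      deriv C₁ t + (C₁ t)^2 / (C₂ t)^2 = -8/25 :=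
  stmt_8_general t₀ γ C₂ hC₂ C₁ hC₁
end

section
/- Suppose A₁, A₂ > 0 satisfy A₁' = k₁(A₁/A₂)² + k₃ and A₂' = −A₁/A₂ (parameters k₂ = l₁ = l₃ = 0, l₂ = −1). Then Ric₀₀ − Ric₂₂ = −(4/A₂⁴)·((k₁² + k₁ − 2)A₁² + (k₁k₃ + 2)A₂²). In particular this vanishes identically (with A₁, A₂ linearly independent) only if (k₁,k₃) = (1,−2) or (k₁,k₃) = (−2,1). -/
/-!
Everything is driven by the ratio `r = A₁ / A₂`: the system gives `A₂' = -r` and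
`r' = ((k₁ + 1) r² + k₃) / A₂`, so both second derivatives are rational in `A₁, A₂`, and the
Ricci difference becomes a rational identity. The coefficient conditions factor as
`(k₁ - 1)(k₁ + 2) = 0` together with `k₁ k₃ = -2`.
-/

open Real Set

section FirstOrderSystem

variable {k₁ k₃ : ℝ} {A₁ A₂ : ℝ → ℝ} {t : ℝ}

theorem hasDerivAt_div_of_system (hd₁ : DifferentiableAt ℝ A₁ t)
    (hd₂ : DifferentiableAt ℝ A₂ t) (h₂ : A₂ t ≠ 0)
    (hA₁' : deriv A₁ t = k₁ * (A₁ t / A₂ t)^2 + k₃) (hA₂' : deriv A₂ t = -(A₁ t / A₂ t)) :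
    HasDerivAt (fun u => A₁ u / A₂ u) (((k₁ + 1) * (A₁ t / A₂ t)^2 + k₃) / A₂ t) t := by
  refine (hd₁.hasDerivAt.div hd₂.hasDerivAt h₂).congr_deriv ?_
  rw [hA₁', hA₂']
  field_simp
  ring

variable (hd₁ : Differentiable ℝ A₁) (hd₂ : Differentiable ℝ A₂) (h₂ : ∀ t, A₂ t ≠ 0)
  (hA₁' : ∀ t, deriv A₁ t = k₁ * (A₁ t / A₂ t)^2 + k₃)
  (hA₂' : ∀ t, deriv A₂ t = -(A₁ t / A₂ t))
include hd₁ hd₂ h₂ hA₁' hA₂'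

theorem deriv_deriv_fst_of_system (t : ℝ) :
    deriv (deriv A₁) t
      = 2 * k₁ * (A₁ t / A₂ t) * (((k₁ + 1) * (A₁ t / A₂ t)^2 + k₃) / A₂ t) := by
  have hr := hasDerivAt_div_of_system (hd₁ t) (hd₂ t) (h₂ t) (hA₁' t) (hA₂' t)
  rw [funext hA₁']
  refine (((hr.pow 2).const_mul k₁).add_const k₃).deriv.trans ?_
  ring

theorem deriv_deriv_snd_of_system (t : ℝ) :
    deriv (deriv A₂) t = -(((k₁ + 1) * (A₁ t / A₂ t)^2 + k₃) / A₂ t) := by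
  rw [funext hA₂']
  exact (hasDerivAt_div_of_system (hd₁ t) (hd₂ t) (h₂ t) (hA₁' t) (hA₂' t)).neg.deriv

end FirstOrderSystem

theorem eq_of_sq_add_self_sub_two_eq_zero_of_mul_add_two_eq_zero {k₁ k₃ : ℝ}
    (h₁ : k₁^2 + k₁ - 2 = 0) (h₃ : k₁ * k₃ + 2 = 0) :
    (k₁ = 1 ∧ k₃ = -2) ∨ (k₁ = -2 ∧ k₃ = 1) := by
  have hfactor : (k₁ - 1) * (k₁ + 2) = 0 := by linear_combination h₁
  rcases mul_eq_zero.mp hfactor with hk | hk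
  · have hk₁ : k₁ = 1 := by linarith
    exact Or.inl ⟨hk₁, by subst hk₁; linarith⟩
  · have hk₁ : k₁ = -2 := by linarith
    exact Or.inr ⟨hk₁, by subst hk₁; linarith⟩

theorem stmt_14 (k₁ k₃ : ℝ) (A₁ A₂ : ℝ → ℝ)
    (hd₁ : Differentiable ℝ A₁) (hd₂ : Differentiable ℝ A₂)
    (hp₁ : ∀ t, 0 < A₁ t) (hp₂ : ∀ t, 0 < A₂ t)
    (hA₁' : ∀ t, deriv A₁ t = k₁ * (A₁ t / A₂ t)^2 + k₃)
    (hA₂' : ∀ t, deriv A₂ t = -(A₁ t / A₂ t)) :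
    (∀ t, (-2 * deriv (deriv A₁) t / A₁ t - 4 * deriv (deriv A₂) t / A₂ t)
        - (-2 * deriv (deriv A₂) t / A₂ t
            - 2 * deriv A₁ t * deriv A₂ t / (A₁ t * A₂ t)
            - 4 * (A₁ t)^2 / (A₂ t)^4
            - 2 * (deriv A₂ t)^2 / (A₂ t)^2 + 8 / (A₂ t)^2)
      = -(4 / (A₂ t)^4)
        * ((k₁^2 + k₁ - 2) * (A₁ t)^2 + (k₁ * k₃ + 2) * (A₂ t)^2)) ∧
    ((k₁^2 + k₁ - 2 = 0 ∧ k₁ * k₃ + 2 = 0) →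
      (k₁ = 1 ∧ k₃ = -2) ∨ (k₁ = -2 ∧ k₃ = 1)) := by
  refine ⟨fun t => ?_, fun ⟨h₁, h₃⟩ =>
    eq_of_sq_add_self_sub_two_eq_zero_of_mul_add_two_eq_zero h₁ h₃⟩
  have h₂ : ∀ t, A₂ t ≠ 0 := fun t => (hp₂ t).ne'
  have h₁ : A₁ t ≠ 0 := (hp₁ t).ne'
  have h₂t := h₂ t
  rw [deriv_deriv_fst_of_system hd₁ hd₂ h₂ hA₁' hA₂',
    deriv_deriv_snd_of_system hd₁ hd₂ h₂ hA₁' hA₂', hA₁' t, hA₂' t]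
  field_simp
  ring
end
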